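/- arXiv:2401.16147 — 4 statements merged into one kernel-verified Lean document; each statement's English description precedes it below -/
import Mathlib

section
/- Tsirelson's classical inequality: if (X₀, X₁, X₂) are real random variables on a common probability space satisfying Xₖ = cos(2πk/3)·X₀ + sin(2πk/3)·Y₀ pointwise for some random variable Y₀, then (1/3)·∑_{k=0}^{2} [P(Xₖ > 0) + (1/2)·P(Xₖ = 0)] ≤ 2/3. -/
open Real MeasureTheory

/-!
The three precessed variables sum to zero pointwise, because the cube roots of unity do.
Among `n ≥ 2` reals with zero sum either one is negative or all vanish, so the sum of their
Heaviside values is at most `n - 1`; taking expectations gives `3 P₃ ≤ 2`.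
-/

lemma sum_range_exp_two_pi_mul_I_div {n : ℕ} (hn : 1 < n) :
    ∑ k ∈ Finset.range n, Complex.exp ((2 * π * k / n : ℝ) * Complex.I) = 0 := by
  rw [← (Complex.isPrimitiveRoot_exp n (by omega)).geom_sum_eq_zero hn]
  refine Finset.sum_congr rfl fun k _ => ?_
  rw [← Complex.exp_nat_mul]
  push_cast
  ring_nf

lemma sum_range_cos_two_pi_mul_div {n : ℕ} (hn : 1 < n) :
    ∑ k ∈ Finset.range n, cos (2 * π * k / n) = 0 := by
  simpa only [Complex.re_sum, Complex.exp_ofReal_mul_I_re, Complex.zero_re]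
    using congrArg Complex.re (sum_range_exp_two_pi_mul_I_div hn)

lemma sum_range_sin_two_pi_mul_div {n : ℕ} (hn : 1 < n) :
    ∑ k ∈ Finset.range n, sin (2 * π * k / n) = 0 := by
  simpa only [Complex.im_sum, Complex.exp_ofReal_mul_I_im, Complex.zero_im]
    using congrArg Complex.im (sum_range_exp_two_pi_mul_I_div hn)

lemma sum_fin_cos_mul_add_sin_mul {n : ℕ} (hn : 1 < n) (a b : ℝ) :
    ∑ k : Fin n, (cos (2 * π * k / n) * a + sin (2 * π * k / n) * b) = 0 := by
  rw [Finset.sum_add_distrib, ← Finset.sum_mul, ← Finset.sum_mul,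
    Fin.sum_univ_eq_sum_range (fun k => cos (2 * π * k / n)),
    Fin.sum_univ_eq_sum_range (fun k => sin (2 * π * k / n)),
    sum_range_cos_two_pi_mul_div hn, sum_range_sin_two_pi_mul_div hn]
  ring

noncomputable def heaviside (x : ℝ) : ℝ :=
  if 0 < x then 1 else if x = 0 then 1 / 2 else 0

lemma heaviside_nonneg (x : ℝ) : 0 ≤ heaviside x := by
  unfold heaviside; split_ifs <;> norm_num

lemma heaviside_le_one (x : ℝ) : heaviside x ≤ 1 := by
  unfold heaviside; split_ifs <;> norm_num

lemma heaviside_of_neg {x : ℝ} (hx : x < 0) : heaviside x = 0 := by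
  simp [heaviside, hx.not_gt, hx.ne]

lemma heaviside_zero : heaviside 0 = 1 / 2 := by
  simp [heaviside]

lemma heaviside_eq_indicator (x : ℝ) :
    heaviside x = Set.indicator (Set.Ioi 0) 1 x + 1 / 2 * Set.indicator {0} 1 x := by
  unfold heaviside
  by_cases hpos : 0 < x
  · simp [hpos, hpos.ne']
  · by_cases hzero : x = 0 <;> simp [hpos, hzero]

lemma measurable_heaviside : Measurable heaviside := by
  simp_rw [funext heaviside_eq_indicator]
  fun_prop (disch := measurability)

lemma sum_heaviside_le_card_sub_one {ι : Type*} [Fintype ι] (hι : 2 ≤ Fintype.card ι)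
    (x : ι → ℝ) (hx : ∑ i, x i = 0) : ∑ i, heaviside (x i) ≤ Fintype.card ι - 1 := by
  classical
  by_cases hneg : ∃ j, x j < 0
  · obtain ⟨j, hj⟩ := hneg
    calc ∑ i, heaviside (x i)
        = heaviside (x j) + ∑ i ∈ Finset.univ.erase j, heaviside (x i) :=
          (Finset.add_sum_erase _ _ (Finset.mem_univ j)).symm
      _ ≤ 0 + ∑ _i ∈ Finset.univ.erase j, (1 : ℝ) := by
          rw [heaviside_of_neg hj]
          gcongr with i
          exact heaviside_le_one _
      _ = Fintype.card ι - 1 := by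
          rw [Finset.sum_const, Finset.card_erase_of_mem (Finset.mem_univ j),
            Finset.card_univ, nsmul_one, Nat.cast_pred (by omega), zero_add]
  · simp only [not_exists, not_lt] at hneg
    have hzero : ∀ i, x i = 0 := fun i =>
      (Finset.sum_eq_zero_iff_of_nonneg fun i _ => hneg i).mp hx i (Finset.mem_univ i)
    have hι' : (2 : ℝ) ≤ Fintype.card ι := by exact_mod_cast hι
    simp only [hzero, heaviside_zero, Finset.sum_const, Finset.card_univ, nsmul_eq_mul]
    linarith

section Probability

variable {Ω : Type*} [MeasurableSpace Ω] (μ : Measure Ω)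

lemma integral_heaviside_comp [IsFiniteMeasure μ] {X : Ω → ℝ} (hX : Measurable X) :
    ∫ ω, heaviside (X ω) ∂μ = (μ {ω | X ω > 0}).toReal + 1 / 2 * (μ {ω | X ω = 0}).toReal := by
  have hpos : MeasurableSet (X ⁻¹' Set.Ioi 0) := hX measurableSet_Ioi
  have hzero : MeasurableSet (X ⁻¹' {0}) := hX (measurableSet_singleton 0)
  simp_rw [heaviside_eq_indicator, ← Set.indicator_comp_right X, Pi.one_comp]
  rw [integral_add, integral_const_mul, integral_indicator_one hpos, integral_indicator_one hzero]
  · rfl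
  · exact (integrable_const 1).indicator hpos
  · exact ((integrable_const 1).indicator hzero).const_mul _

lemma integrable_heaviside_comp [IsFiniteMeasure μ] {X : Ω → ℝ} (hX : Measurable X) :
    Integrable (fun ω => heaviside (X ω)) μ :=
  Integrable.of_bound (measurable_heaviside.comp hX).aestronglyMeasurable 1
    (ae_of_all _ fun ω => by
      rw [Real.norm_of_nonneg (heaviside_nonneg _)]
      exact heaviside_le_one _)

lemma sum_integral_heaviside_le [IsProbabilityMeasure μ] {ι : Type*} [Fintype ι]
    (hι : 2 ≤ Fintype.card ι) (X : ι → Ω → ℝ) (hX : ∀ i, Measurable (X i))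
    (hsum : ∀ ω, ∑ i, X i ω = 0) :
    ∑ i, ∫ ω, heaviside (X i ω) ∂μ ≤ Fintype.card ι - 1 := by
  rw [← integral_finsetSum _ fun i _ => integrable_heaviside_comp μ (hX i)]
  calc ∫ ω, ∑ i, heaviside (X i ω) ∂μ
      ≤ ∫ _ω, ((Fintype.card ι : ℝ) - 1) ∂μ :=
        integral_mono (integrable_finsetSum _ fun i _ => integrable_heaviside_comp μ (hX i))
          (integrable_const _) fun ω => sum_heaviside_le_card_sub_one hι _ (hsum ω)
    _ = Fintype.card ι - 1 := by simp

end Probability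

theorem stmt_2 {Ω : Type*} [MeasurableSpace Ω] (μ : Measure Ω) [IsProbabilityMeasure μ]
    (X₀ Y₀ : Ω → ℝ) (hX₀ : Measurable X₀) (hY₀ : Measurable Y₀)
    (X : Fin 3 → Ω → ℝ)
    (hX : ∀ (k : Fin 3) (ω : Ω),
      X k ω = Real.cos (2 * π * k / 3) * X₀ ω + Real.sin (2 * π * k / 3) * Y₀ ω) :
    (1 / 3) * ∑ k : Fin 3,
      ((μ {ω | X k ω > 0}).toReal + (1 / 2) * (μ {ω | X k ω = 0}).toReal) ≤ 2 / 3 := by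
  have hX' : ∀ k, X k = fun ω => cos (2 * π * k / 3) * X₀ ω + sin (2 * π * k / 3) * Y₀ ω :=
    fun k => funext (hX k)
  have hmeas : ∀ k, Measurable (X k) := fun k => by
    rw [hX' k]
    fun_prop
  have hsum : ∀ ω, ∑ k, X k ω = 0 := fun ω => by
    have := sum_fin_cos_mul_add_sin_mul (n := 3) (by norm_num) (X₀ ω) (Y₀ ω)
    simpa only [hX', Nat.cast_ofNat] using this
  have hbound := sum_integral_heaviside_le μ (by simp) X hmeas hsum
  simp only [integral_heaviside_comp μ (hmeas _), Fintype.card_fin] at hbound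
  linarith
end

section
/- Theory-independent bound without zero in spectrum: under the same hypotheses but with 0 ∉ Λ (and no assumption x₊ < x₋), the score satisfies P₃ ≤ (1 + x₊/x₋)⁻¹. -/
open Real

theorem stmt_5 (Λ : Finset ℝ)
    (h0 : (0 : ℝ) ∉ Λ)
    (hpos : (Λ.filter fun a => 0 < a).Nonempty)
    (hneg : (Λ.filter fun a => a < 0).Nonempty)
    (xp xm : ℝ)
    (hxp : xp = (Λ.filter fun a => 0 < a).min' hpos)
    (hxm : xm = -((Λ.filter fun a => a < 0).min' hneg))
    (p : Fin 3 → ℝ → ℝ)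
    (hpnn : ∀ (k : Fin 3), ∀ a ∈ Λ, 0 ≤ p k a)
    (hnorm : ∀ k : Fin 3, ∑ a ∈ Λ, p k a = 1)
    (hmean : ∑ k : Fin 3, ∑ a ∈ Λ, a * p k a = 0) :
    (1 / 3) * ∑ k : Fin 3, ∑ a ∈ Λ.filter (fun a => 0 < a), p k a ≤ (1 + xp / xm)⁻¹ := by
  have hxp0 : 0 < xp := by
    rw [hxp]
    have := Finset.min'_mem (Λ.filter fun a => 0 < a) hpos
    exact (Finset.mem_filter.mp this).2
  have hxm0 : 0 < xm := by
    rw [hxm]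
    have := Finset.min'_mem (Λ.filter fun a => a < 0) hneg
    linarith [(Finset.mem_filter.mp this).2]
  set S := ∑ k : Fin 3, ∑ a ∈ Λ.filter (fun a => 0 < a), p k a with hS
  have hsplit : ∀ k : Fin 3,
      (∑ a ∈ Λ.filter (fun a => 0 < a), p k a) + ∑ a ∈ Λ.filter (fun a => a < 0), p k a = 1 := by
    intro k
    have : Λ.filter (fun a => a < 0) = Λ.filter (fun a => ¬ 0 < a) := by
      apply Finset.filter_congr
      intro a ha
      have hne : a ≠ 0 := fun h => h0 (h ▸ ha)
      simp only [not_lt]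
      constructor
      · intro h; exact le_of_lt h
      · intro h; exact lt_of_le_of_ne h hne
    rw [this, Finset.sum_filter_add_sum_filter_not]
    exact hnorm k
  -- lower bound on mean
  have key : ∀ k : Fin 3, xp * (∑ a ∈ Λ.filter (fun a => 0 < a), p k a)
      - xm * (∑ a ∈ Λ.filter (fun a => a < 0), p k a) ≤ ∑ a ∈ Λ, a * p k a := by
    intro k
    have hsum : ∑ a ∈ Λ, a * p k a
        = (∑ a ∈ Λ.filter (fun a => 0 < a), a * p k a)
          + ∑ a ∈ Λ.filter (fun a => a < 0), a * p k a := by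
      have : Λ.filter (fun a => a < 0) = Λ.filter (fun a => ¬ 0 < a) := by
        apply Finset.filter_congr
        intro a ha
        have hne : a ≠ 0 := fun h => h0 (h ▸ ha)
        simp only [not_lt]
        constructor
        · intro h; exact le_of_lt h
        · intro h; exact lt_of_le_of_ne h hne
      rw [this, Finset.sum_filter_add_sum_filter_not]
    rw [hsum, mul_comm xp, mul_comm xm, Finset.sum_mul, Finset.sum_mul, sub_eq_add_neg,
      ← Finset.sum_neg_distrib]
    apply add_le_add
    · apply Finset.sum_le_sum
      intro a ha
      have hmem := Finset.mem_filter.mp ha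
      have hle : xp ≤ a := hxp ▸ Finset.min'_le _ a ha
      exact mul_le_mul_of_nonneg_left hle (hpnn k a hmem.1) |>.trans_eq (by ring) |>.trans_eq rfl
    · apply Finset.sum_le_sum
      intro a ha
      have hmem := Finset.mem_filter.mp ha
      have hle : -xm ≤ a := by
        rw [hxm, neg_neg]; exact Finset.min'_le _ a ha
      have := mul_le_mul_of_nonneg_left hle (hpnn k a hmem.1)
      nlinarith
  have hsum3 : xp * S - xm * (3 - S) ≤ 0 := by
    have hN : ∑ k : Fin 3, ∑ a ∈ Λ.filter (fun a => a < 0), p k a = 3 - S := by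
      have h3 : ∑ k : Fin 3, ((∑ a ∈ Λ.filter (fun a => 0 < a), p k a)
          + ∑ a ∈ Λ.filter (fun a => a < 0), p k a) = 3 := by
        simp [hsplit]
      rw [Finset.sum_add_distrib] at h3
      rw [hS]
      linarith
    have := Finset.sum_le_sum (f := fun k : Fin 3 => xp * (∑ a ∈ Λ.filter (fun a => 0 < a), p k a)
      - xm * (∑ a ∈ Λ.filter (fun a => a < 0), p k a)) (g := fun k => ∑ a ∈ Λ, a * p k a)
      (fun k (_ : k ∈ Finset.univ) => key k)
    rw [hmean] at this
    simp only [Finset.sum_sub_distrib, ← Finset.mul_sum] at this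
    rw [hN] at this
    linarith
  have hgoal : (1 + xp / xm)⁻¹ = xm / (xm + xp) := by
    rw [one_add_div hxm0.ne', inv_div, add_comm]
  rw [hgoal, le_div_iff₀ (by linarith : (0:ℝ) < xm + xp)]
  nlinarith
end

section
/- The 4×4 Hermitian matrix X := (x₋-x₊)(|1⟩⟨2|+|2⟩⟨1|) + √(x₊x₋)(|0⟩⟨1|+|1⟩⟨0|+|2⟩⟨3|+|3⟩⟨2|), for x₋ > x₊ > 0, has eigenvalues exactly {-x₋, -x₊, x₊, x₋}. -/
/- The matrix is a palindromic tridiagonal matrix with off-diagonal entries `a, b, a`, whose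
characteristic polynomial `z⁴ - (2a² + b²) z² + a⁴` is even in `z`. With `a² = x₊x₋` and
`b = x₋ - x₊` it factors as `(z² - x₊²)(z² - x₋²)`. -/

open Real Matrix

theorem det_scalar_sub_palindromicTridiagonal {R : Type*} [CommRing R] (a b z : R) :
    (scalar (Fin 4) z - !![0, a, 0, 0; a, 0, b, 0; 0, b, 0, a; 0, 0, a, 0]).det
      = z ^ 4 - (2 * a ^ 2 + b ^ 2) * z ^ 2 + a ^ 4 := by
  rw [det_succ_row_zero, Fin.sum_univ_four]
  simp [det_fin_three, Fin.succAbove]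
  ring

theorem spectrum_palindromicTridiagonal {K : Type*} [Field K] {a b p m : K}
    (ha : a ^ 2 = p * m) (hb : b = m - p) :
    spectrum K !![0, a, 0, 0; a, 0, b, 0; 0, b, 0, a; 0, 0, a, 0] = {-m, -p, p, m} := by
  have hfactor (z : K) : z ^ 4 - (2 * a ^ 2 + b ^ 2) * z ^ 2 + a ^ 4
      = (z + m) * (z + p) * (z - p) * (z - m) := by
    rw [show a ^ 4 = (a ^ 2) ^ 2 by ring, ha, hb]
    ring
  ext z
  rw [mem_spectrum_iff_isRoot_charpoly, Polynomial.IsRoot.def, eval_charpoly,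
    det_scalar_sub_palindromicTridiagonal, hfactor]
  simp [sub_eq_zero, add_eq_zero_iff_eq_neg, or_assoc]

theorem stmt_8 (xp xm : ℝ) (hxp : 0 < xp) (hlt : xp < xm)
    (X : Matrix (Fin 4) (Fin 4) ℂ)
    (hX : X = !![0, (Real.sqrt (xp * xm) : ℂ), 0, 0;
                 (Real.sqrt (xp * xm) : ℂ), 0, ((xm - xp : ℝ) : ℂ), 0;
                 0, ((xm - xp : ℝ) : ℂ), 0, (Real.sqrt (xp * xm) : ℂ);
                 0, 0, (Real.sqrt (xp * xm) : ℂ), 0]) :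
    spectrum ℂ X = {(-xm : ℂ), (-xp : ℂ), (xp : ℂ), (xm : ℂ)} := by
  have hsqrt : ((√(xp * xm) : ℝ) : ℂ) ^ 2 = xp * xm := by
    rw [← Complex.ofReal_pow, Real.sq_sqrt (mul_nonneg hxp.le (hxp.trans hlt).le),
      Complex.ofReal_mul]
  rw [hX]
  exact spectrum_palindromicTridiagonal hsqrt (Complex.ofReal_sub xm xp)
end

section
/- Optimal quantum score: with X, Y, H as above and tₖ = 2πk/(3ω), the state |P₃⟩ := (|0⟩ - |3⟩)/√2 achieves (1/3)∑_{k=0}^{2} ⟨P₃| e^{iHtₖ} Π₊ e^{-iHtₖ} |P₃⟩ = (1 + x₊/x₋)⁻¹, where Π₊ is the projector onto the positive eigenspaces of X (spanned by the eigenvectors with eigenvalues x₊ and x₋). -/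
/-!
The state `ψ = (|0⟩ - |3⟩)/√2` lives on the levels `0` and `3ω` of `H`, and at the times
`tₖ = 2πk/(3ω)` the phase `e^{3iωtₖ}` is `1`; so `e^{-iHtₖ} ψ = ψ` and every term of the average
equals `⟨ψ|Π₊|ψ⟩`. The eigenvector of `x₋` is orthogonal to `ψ`, and the one of `x₊` has overlap
`√2 √x₋` with it, so `⟨ψ|Π₊|ψ⟩ = 2x₋ / (2(x₊ + x₋)) = (1 + x₊/x₋)⁻¹`.
-/

open Real Matrix Complex

namespace Matrix

variable {n R : Type*} [Fintype n]

theorem exp_smul_diagonal [DecidableEq n] (c : ℂ) (d : n → ℂ) :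
    NormedSpace.exp (c • diagonal d) = diagonal fun i => Complex.exp (c * d i) := by
  rw [← diagonal_smul, exp_diagonal]
  congr 1
  funext i
  simp [Complex.exp_eq_exp_ℂ]

section Semiring

variable [Semiring R]

theorem diagonal_mulVec_eq_self [DecidableEq n] {d v : n → R} (h : ∀ i, v i ≠ 0 → d i = 1) :
    diagonal d *ᵥ v = v := by
  funext i
  rw [mulVec_diagonal]
  by_cases hv : v i = 0
  · rw [hv, mul_zero]
  · rw [h i hv, one_mul]

theorem vecMul_diagonal_eq_self [DecidableEq n] {d v : n → R} (h : ∀ i, v i ≠ 0 → d i = 1) :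
    v ᵥ* diagonal d = v := by
  funext i
  rw [vecMul_diagonal]
  by_cases hv : v i = 0
  · rw [hv, zero_mul]
  · rw [h i hv, mul_one]

theorem dotProduct_mul_mul_mulVec_of_fixed {u v : n → R} {A B : Matrix n n R}
    (hA : u ᵥ* A = u) (hB : B *ᵥ v = v) (P : Matrix n n R) :
    u ⬝ᵥ (A * P * B) *ᵥ v = u ⬝ᵥ P *ᵥ v := by
  rw [← mulVec_mulVec, hB, ← mulVec_mulVec, dotProduct_mulVec, hA]

end Semiring

theorem dotProduct_vecMulVec_mulVec [CommSemiring R] (u a b v : n → R) :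
    u ⬝ᵥ vecMulVec a b *ᵥ v = (u ⬝ᵥ a) * (b ⬝ᵥ v) := by
  rw [vecMulVec_mulVec, op_smul_eq_smul, dotProduct_smul, smul_eq_mul, mul_comm]

end Matrix

-- For `ω = 0` the clock time is the junk value `0`, and the phase is trivially `1`.
theorem exp_mul_clock_time_eq_one (ω : ℝ) (k : ℕ) {c : ℂ} (hc : c = I ∨ c = -I) :
    Complex.exp (c * ((2 * π * k / (3 * ω) : ℝ) : ℂ) * (3 * ω)) = 1 := by
  rw [Complex.exp_eq_one_iff]
  rcases eq_or_ne ω 0 with rfl | hω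
  · exact ⟨0, by simp⟩
  have hω' : (ω : ℂ) ≠ 0 := ofReal_ne_zero.mpr hω
  rcases hc with rfl | rfl
  · exact ⟨k, by push_cast; field_simp⟩
  · exact ⟨-k, by push_cast; field_simp⟩

theorem exp_mul_clock_spectrum_eq_one {c ω : ℂ} (h : Complex.exp (c * (3 * ω)) = 1)
    {v : Fin 4 → ℂ} (hv₁ : v 1 = 0) (hv₂ : v 2 = 0) (i : Fin 4) (hi : v i ≠ 0) :
    Complex.exp (c * ![0, ω, 2 * ω, 3 * ω] i) = 1 := by
  fin_cases i <;> simp_all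

theorem expectation_positive_projector {xp xm : ℝ} (hxm : 0 ≤ xm) :
    let vm : Fin 4 → ℂ := ![(√xp : ℂ), (√xm : ℂ), (√xm : ℂ), (√xp : ℂ)]
    let vp : Fin 4 → ℂ := ![(√xm : ℂ), (√xp : ℂ), (-√xp : ℂ), (-√xm : ℂ)]
    let ψ : Fin 4 → ℂ := ![((1 / √2 : ℝ) : ℂ), 0, 0, ((-(1 / √2) : ℝ) : ℂ)]
    star ψ ⬝ᵥ (((2 * (xp + xm) : ℝ) : ℂ)⁻¹ • (vecMulVec vm (star vm) + vecMulVec vp (star vp))) *ᵥ ψ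
      = ((xm / (xp + xm) : ℝ) : ℂ) := by
  intro vm vp ψ
  have h2 : ((√2 : ℝ) : ℂ) ^ 2 = 2 := by exact_mod_cast Real.sq_sqrt zero_le_two
  have hψm : star ψ ⬝ᵥ vm = 0 := by simp [ψ, vm, dotProduct, Fin.sum_univ_four]
  have hψp : star ψ ⬝ᵥ vp = √2 * √xm := by
    simp only [dotProduct, one_div, ofReal_inv, ofReal_neg, Pi.star_apply, RCLike.star_def,
      Fin.sum_univ_four, cons_val_zero, map_inv₀, conj_ofReal, cons_val_one, map_zero, zero_mul,
      add_zero, cons_val, mul_neg, neg_zero, map_neg, neg_mul, neg_neg, ψ, vp]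
    field_simp
    linear_combination -(√xm : ℂ) * h2
  have hpψ : star vp ⬝ᵥ ψ = √2 * √xm := by
    rw [star_dotProduct, hψp]
    simp
  rw [smul_mulVec, add_mulVec, dotProduct_smul, dotProduct_add, dotProduct_vecMulVec_mulVec,
    dotProduct_vecMulVec_mulVec, hψm, hψp, hpψ, zero_mul, zero_add, smul_eq_mul, mul_mul_mul_comm, ← sq, h2, ← ofReal_mul,
    Real.mul_self_sqrt hxm]
  push_cast
  field_simp

theorem stmt_11_general (xp xm ω : ℝ) (hxp : 0 < xp) (hlt : xp < xm)
    (H : Matrix (Fin 4) (Fin 4) ℂ)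
    (hH : H = Matrix.diagonal ![0, (ω : ℂ), (2 * ω : ℂ), (3 * ω : ℂ)])
    (t : Fin 3 → ℝ) (ht : ∀ k : Fin 3, t k = 2 * π * k / (3 * ω))
    (vm vp : Fin 4 → ℂ)
    (hvm : vm = ![(Real.sqrt xp : ℂ), (Real.sqrt xm : ℂ), (Real.sqrt xm : ℂ), (Real.sqrt xp : ℂ)])
    (hvp : vp = ![(Real.sqrt xm : ℂ), (Real.sqrt xp : ℂ), (-Real.sqrt xp : ℂ), (-Real.sqrt xm : ℂ)])
    (Pp : Matrix (Fin 4) (Fin 4) ℂ)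
    (hPp : Pp = ((2 * (xp + xm) : ℝ) : ℂ)⁻¹ •
      (Matrix.vecMulVec vm (star vm) + Matrix.vecMulVec vp (star vp)))
    (ψ : Fin 4 → ℂ)
    (hψ : ψ = ![((1 / Real.sqrt 2 : ℝ) : ℂ), 0, 0, ((-(1 / Real.sqrt 2) : ℝ) : ℂ)]) :
    (1 / 3 : ℂ) * ∑ k : Fin 3,
      star ψ ⬝ᵥ ((NormedSpace.exp ((Complex.I * (t k : ℝ)) • H) * Pp *
        NormedSpace.exp ((-Complex.I * (t k : ℝ)) • H)).mulVec ψ)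
      = (((1 + xp / xm)⁻¹ : ℝ) : ℂ) := by
  have hxm : 0 < xm := hxp.trans hlt
  have hψ₁ : ψ 1 = 0 := by simp [hψ]
  have hψ₂ : ψ 2 = 0 := by simp [hψ]
  have hterm : ∀ k : Fin 3, star ψ ⬝ᵥ ((NormedSpace.exp ((I * (t k : ℝ)) • H) * Pp *
      NormedSpace.exp ((-I * (t k : ℝ)) • H)) *ᵥ ψ) = star ψ ⬝ᵥ Pp *ᵥ ψ := by
    intro k
    rw [hH, exp_smul_diagonal, exp_smul_diagonal, ht k]
    refine dotProduct_mul_mul_mulVec_of_fixed (vecMul_diagonal_eq_self ?_)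
      (diagonal_mulVec_eq_self ?_) Pp
    · exact exp_mul_clock_spectrum_eq_one (exp_mul_clock_time_eq_one ω k (.inl rfl))
        (by simp [hψ₁]) (by simp [hψ₂])
    · exact exp_mul_clock_spectrum_eq_one (exp_mul_clock_time_eq_one ω k (.inr rfl)) hψ₁ hψ₂
  have hexp : star ψ ⬝ᵥ Pp *ᵥ ψ = ((xm / (xp + xm) : ℝ) : ℂ) := by
    subst hψ hPp hvm hvp
    exact expectation_positive_projector hxm.le
  rw [Finset.sum_congr rfl fun k _ => hterm k, Finset.sum_const, Finset.card_univ,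
    Fintype.card_fin, hexp, one_add_div hxm.ne', inv_div, add_comm xm]
  push_cast
  ring

theorem stmt_11 (xp xm ω : ℝ) (hxp : 0 < xp) (hlt : xp < xm) (hω : 0 < ω)
    (H : Matrix (Fin 4) (Fin 4) ℂ)
    (hH : H = Matrix.diagonal ![0, (ω : ℂ), (2 * ω : ℂ), (3 * ω : ℂ)])
    (t : Fin 3 → ℝ) (ht : ∀ k : Fin 3, t k = 2 * π * k / (3 * ω))
    (vm vp : Fin 4 → ℂ)
    (hvm : vm = ![(Real.sqrt xp : ℂ), (Real.sqrt xm : ℂ), (Real.sqrt xm : ℂ), (Real.sqrt xp : ℂ)])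
    (hvp : vp = ![(Real.sqrt xm : ℂ), (Real.sqrt xp : ℂ), (-Real.sqrt xp : ℂ), (-Real.sqrt xm : ℂ)])
    (Pp : Matrix (Fin 4) (Fin 4) ℂ)
    (hPp : Pp = ((2 * (xp + xm) : ℝ) : ℂ)⁻¹ •
      (Matrix.vecMulVec vm (star vm) + Matrix.vecMulVec vp (star vp)))
    (ψ : Fin 4 → ℂ)
    (hψ : ψ = ![((1 / Real.sqrt 2 : ℝ) : ℂ), 0, 0, ((-(1 / Real.sqrt 2) : ℝ) : ℂ)]) :
    (1 / 3 : ℂ) * ∑ k : Fin 3,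
      star ψ ⬝ᵥ ((NormedSpace.exp ((Complex.I * (t k : ℝ)) • H) * Pp *
        NormedSpace.exp ((-Complex.I * (t k : ℝ)) • H)).mulVec ψ)
      = (((1 + xp / xm)⁻¹ : ℝ) : ℂ) :=
  stmt_11_general xp xm ω hxp hlt H hH t ht vm vp hvm hvp Pp hPp ψ hψ
end
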